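/- Let Φ : [0, ∞) → ℝ be C² and super-quadratic on [0, ∞) (i.e. Φ(sr) ≥ s²Φ(r) for all r ≥ 0 and s ≥ 1) with Φ(0) = Φ′(0) = 0 and β := Φ″(0) ≥ 0, and suppose Φ(r) ≥ (β/2)r² + εr^p for all r ≥ 0 with constants ε > 0 and p > 2. Then there exists γ₀ ≥ 0 such that for every γ > γ₀ the supremum of P over S_γ is strictly greater than βγ; moreover, if β = 0 or 2 < p < 6, then one may take γ₀ = 0, i.e. sup_{W ∈ S_γ} P(W) > βγ for every γ > 0. -/

import Mathlib

open MeasureTheory Real Filter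

/-- Averaging operator `(Ā W)(φ) = ∫_{φ-1/2}^{φ+1/2} W(ψ) dψ`. -/
noncomputable def avg (W : ℝ → ℝ) (φ : ℝ) : ℝ := ∫ ψ in (φ - 1/2)..(φ + 1/2), W ψ

/-- `Φ'`, the derivative of the potential, taken within the relevant interval. -/
noncomputable def Phi' (Φ : ℝ → ℝ) (γ : ℝ) : ℝ → ℝ :=
  fun r => derivWithin Φ (Set.Icc (-Real.sqrt (2*γ)) (Real.sqrt (2*γ))) r

/-- `Φ''`, the second derivative of the potential, taken within the relevant interval. -/
noncomputable def Phi'' (Φ : ℝ → ℝ) (γ : ℝ) : ℝ → ℝ :=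
  fun r => iteratedDerivWithin 2 Φ (Set.Icc (-Real.sqrt (2*γ)) (Real.sqrt (2*γ))) r

/-- Standing assumptions on the potential `Φ` for parameter `γ`:
`Φ` is `C²` on `[-√(2γ), √(2γ)]`, convex there (`Φ'' ≥ 0`), normalised
(`Φ(0) = Φ'(0) = 0`), and does not vanish identically on this interval. -/
def StandingAssumptions (Φ : ℝ → ℝ) (γ : ℝ) : Prop :=
  ContDiffOn ℝ 2 Φ (Set.Icc (-Real.sqrt (2*γ)) (Real.sqrt (2*γ))) ∧
  (∀ r ∈ Set.Icc (-Real.sqrt (2*γ)) (Real.sqrt (2*γ)), 0 ≤ Phi'' Φ γ r) ∧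
  Φ 0 = 0 ∧ Phi' Φ γ 0 = 0 ∧
  ∃ r ∈ Set.Icc (-Real.sqrt (2*γ)) (Real.sqrt (2*γ)), Φ r ≠ 0

/-- `β = Φ''(0)`. -/
noncomputable def betaOf (Φ : ℝ → ℝ) (γ : ℝ) : ℝ := Phi'' Φ γ 0

/-- Potential energy functional `P(W) = ∫_ℝ Φ((ĀW)(φ)) dφ`. -/
noncomputable def PE (Φ : ℝ → ℝ) (W : ℝ → ℝ) : ℝ := ∫ φ : ℝ, Φ (avg W φ)

/-- Gâteaux derivative `∂P(W) = Ā(Φ' ∘ (ĀW))`. -/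
noncomputable def dPE (Φ : ℝ → ℝ) (γ : ℝ) (W : ℝ → ℝ) : ℝ → ℝ :=
  avg (fun ψ => Phi' Φ γ (avg W ψ))

/-- Membership in the ball `B_γ = {W ∈ L²(ℝ) : (1/2)‖W‖₂² ≤ γ}`. -/
def memB (γ : ℝ) (W : ℝ → ℝ) : Prop :=
  MemLp W 2 volume ∧ (∫ φ : ℝ, (W φ)^2) ≤ 2*γ

/-- `W` is (a.e.) even and unimodal. -/
def EvenUnimodal (W : ℝ → ℝ) : Prop :=
  (∀ᵐ φ ∂(volume : Measure ℝ), W (-φ) = W φ) ∧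
  (∀ᵐ p ∂(volume : Measure (ℝ × ℝ)), 0 ≤ p.1 → p.1 ≤ p.2 → W p.2 ≤ W p.1)

/-- Membership in `S_γ`: even, unimodal, a.e. nonnegative functions in `B_γ`. -/
def memS (γ : ℝ) (W : ℝ → ℝ) : Prop :=
  memB γ W ∧ EvenUnimodal W ∧ (∀ᵐ φ ∂(volume : Measure ℝ), 0 ≤ W φ)

/-!
Test `P` on the tent `W` of height `h` and half-width `L` with `h² L = 3γ`, so that
`½‖W‖₂² = γ`. Averaging does not change an affine function, so `ĀW ≥ W` off `[-½, ½]`, while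
`ĀW ≥ h (1 - 1/L)` on it; hence `∫ (ĀW)² ≥ 2γ - 2h²/L` and the quadratic part of `Φ` loses at
most `β h²/L` against `βγ`. On `[-L/2, L/2]` we have `ĀW ≥ h/2`, so the `ε r^p` part gains at
least `ε L (h/2)^p`, and the gain wins as soon as `2^p β < ε L² h^(p-2)`. With `L = 2` this holds
for large `γ`, and for every `γ` when `β = 0`; when `p < 6` it holds for every `γ` by letting
`h → 0` with `L = 3γ/h²`, because then `L² h^(p-2) = 9γ² h^(p-6) → ∞`.
-/

open Set Topology

lemma integrable_comp_of_hasCompactSupport {g V : ℝ → ℝ} {s : Set ℝ} (hg : ContinuousOn g s)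
    (hg0 : g 0 = 0) (hV : Continuous V) (hVc : HasCompactSupport V) (hVs : ∀ x, V x ∈ s) :
    Integrable fun x => g (V x) :=
  (hg.comp_continuous hV hVs).integrable_of_hasCompactSupport (hVc.comp_left hg0)

section Avg

variable {V W : ℝ → ℝ}

lemma avg_const (c φ : ℝ) : avg (fun _ => c) φ = c := by
  simp only [avg, intervalIntegral.integral_const, smul_eq_mul]
  ring

lemma avg_affine (a b φ : ℝ) : avg (fun x => a + b * x) φ = a + b * φ := by
  rw [avg, intervalIntegral.integral_add intervalIntegrable_const
      ((continuous_const_mul b).intervalIntegrable _ _),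
    intervalIntegral.integral_const_mul, integral_id, intervalIntegral.integral_const, smul_eq_mul]
  ring

lemma avg_nonneg (hW : ∀ x, 0 ≤ W x) (φ : ℝ) : 0 ≤ avg W φ :=
  intervalIntegral.integral_nonneg (by linarith) fun x _ => hW x

lemma avg_mono_on {φ : ℝ} (hV : IntervalIntegrable V volume (φ - 1/2) (φ + 1/2))
    (hW : IntervalIntegrable W volume (φ - 1/2) (φ + 1/2))
    (hVW : ∀ x ∈ Icc (φ - 1/2) (φ + 1/2), V x ≤ W x) : avg V φ ≤ avg W φ :=
  intervalIntegral.integral_mono_on (by linarith) hV hW hVW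

lemma avg_neg_of_even (hW : ∀ x, W (-x) = W x) (φ : ℝ) : avg W (-φ) = avg W φ := by
  have := intervalIntegral.integral_comp_neg (a := φ - 1/2) (b := φ + 1/2) W
  simp only [hW] at this
  rw [avg, avg, this]
  ring_nf

lemma continuous_avg (hW : LocallyIntegrable W) : Continuous (avg W) := by
  have hW' : ∀ a b, IntervalIntegrable W volume a b := fun a b =>
    (hW.integrableOn_isCompact isCompact_uIcc).intervalIntegrable
  have : avg W = fun φ => (∫ x in (0:ℝ)..(φ + 1/2), W x) - ∫ x in (0:ℝ)..(φ - 1/2), W x := by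
    funext φ
    exact (intervalIntegral.integral_interval_sub_left (hW' _ _) (hW' _ _)).symm
  have hF := intervalIntegral.continuous_primitive hW' 0
  rw [this]
  exact (hF.comp (by fun_prop)).sub (hF.comp (by fun_prop))

lemma HasCompactSupport.avg (hW : HasCompactSupport W) : HasCompactSupport (avg W) := by
  refine HasCompactSupport.intro (hW.isCompact.cthickening (r := 1/2)) fun φ hφ => ?_
  refine intervalIntegral.integral_zero_ae (Eventually.of_forall fun x hx => ?_)
  by_contra hWx
  refine hφ (Metric.mem_cthickening_of_dist_le φ x _ _ (subset_tsupport W hWx) ?_)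
  rw [uIoc_of_le (by linarith)] at hx
  rw [Real.dist_eq, abs_le]
  constructor <;> linarith [hx.1, hx.2]

end Avg

noncomputable def tent (h L x : ℝ) : ℝ := h * max (1 - |x| / L) 0

section Tent

variable {h L : ℝ}

lemma continuous_tent (h L : ℝ) : Continuous (tent h L) := by
  unfold tent; fun_prop

lemma tent_neg (h L x : ℝ) : tent h L (-x) = tent h L x := by
  rw [tent, abs_neg, tent]

lemma tent_nonneg (hh : 0 ≤ h) (x : ℝ) : 0 ≤ tent h L x :=
  mul_nonneg hh (le_max_right _ _)

lemma tent_eq_max (hh : 0 ≤ h) (x : ℝ) : tent h L x = max (h * (1 - |x| / L)) 0 := by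
  rw [tent, mul_max_of_nonneg _ _ hh, mul_zero]

lemma mul_one_sub_le_tent (hh : 0 ≤ h) (x : ℝ) : h * (1 - |x| / L) ≤ tent h L x :=
  (tent_eq_max hh x).symm ▸ le_max_left _ _

lemma tent_le (hh : 0 ≤ h) (hL : 0 ≤ L) (x : ℝ) : tent h L x ≤ h := by
  have : max (1 - |x| / L) 0 ≤ 1 := max_le (by linarith [div_nonneg (abs_nonneg x) hL]) zero_le_one
  simpa [tent] using mul_le_mul_of_nonneg_left this hh

lemma tent_anti (hh : 0 ≤ h) (hL : 0 ≤ L) {x y : ℝ} (hxy : |x| ≤ |y|) :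
    tent h L y ≤ tent h L x := by
  unfold tent
  gcongr

lemma hasCompactSupport_tent (h : ℝ) (hL : 0 < L) : HasCompactSupport (tent h L) := by
  refine HasCompactSupport.intro (isCompact_Icc (a := -L) (b := L)) fun x hx => ?_
  have hLx : L ≤ |x| := le_of_not_gt fun hlt => hx (abs_le.1 hlt.le)
  rw [tent, max_eq_right (by rwa [sub_nonpos, one_le_div hL]), mul_zero]

lemma integral_tent_sq (h : ℝ) (hL : 0 < L) : ∫ x, tent h L x ^ 2 = 2 * h ^ 2 * L / 3 := by
  simp only [tent]
  rw [integral_comp_abs (f := fun y => (h * max (1 - y / L) 0) ^ 2),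
    setIntegral_eq_of_subset_of_forall_sdiff_eq_zero measurableSet_Ioi Ioc_subset_Ioi_self,
    ← intervalIntegral.integral_of_le hL.le,
    intervalIntegral.integral_congr (g := fun y => h ^ 2 * (1 - y / L) ^ 2)]
  · rw [intervalIntegral.integral_const_mul,
      intervalIntegral.integral_comp_div (fun u => (1 - u) ^ 2) hL.ne',
      intervalIntegral.integral_comp_sub_left (fun u => u ^ 2), integral_pow, div_self hL.ne']
    ring
  · intro y hy
    rw [uIcc_of_le hL.le] at hy
    simp only
    rw [max_eq_left (by rw [sub_nonneg, div_le_one hL]; exact hy.2)]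
    ring
  · intro y hy
    obtain ⟨-, hLy⟩ : 0 < y ∧ L < y := by simpa using hy
    rw [max_eq_right (by rw [sub_nonpos, one_le_div hL]; exact hLy.le)]
    ring

lemma tent_le_avg_tent_of_half_le (hh : 0 ≤ h) {φ : ℝ} (hφ : 1/2 ≤ φ) :
    tent h L φ ≤ avg (tent h L) φ := by
  have haffine : avg (fun x => h + -(h / L) * x) φ ≤ avg (tent h L) φ := by
    refine avg_mono_on (Continuous.intervalIntegrable (by fun_prop) _ _)
      ((continuous_tent h L).intervalIntegrable _ _) fun x hx => ?_
    have := mul_one_sub_le_tent (L := L) hh x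
    rw [abs_of_nonneg (by linarith [hx.1])] at this
    linarith [show h * (1 - x / L) = h + -(h / L) * x by ring]
  rw [avg_affine] at haffine
  rw [tent_eq_max hh, abs_of_nonneg (by linarith)]
  exact max_le (by linarith [show h * (1 - φ / L) = h + -(h / L) * φ by ring])
    (avg_nonneg (tent_nonneg hh) φ)

lemma tent_le_avg_tent (hh : 0 ≤ h) {φ : ℝ} (hφ : 1/2 ≤ |φ|) : tent h L φ ≤ avg (tent h L) φ := by
  rcases le_total 0 φ with hφ0 | hφ0
  · exact tent_le_avg_tent_of_half_le hh (by rwa [abs_of_nonneg hφ0] at hφ)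
  · rw [← tent_neg, ← avg_neg_of_even (tent_neg h L)]
    exact tent_le_avg_tent_of_half_le hh (by rw [abs_of_nonpos hφ0] at hφ; exact hφ)

lemma le_avg_tent (hh : 0 ≤ h) (hL : 0 ≤ L) {φ : ℝ} (hφ : |φ| ≤ 1/2) :
    h * (1 - 1 / L) ≤ avg (tent h L) φ := by
  calc h * (1 - 1 / L) = avg (fun _ => h * (1 - 1 / L)) φ := (avg_const _ _).symm
    _ ≤ avg (tent h L) φ := by
      refine avg_mono_on intervalIntegrable_const ((continuous_tent h L).intervalIntegrable _ _)
        fun x hx => (mul_one_sub_le_tent hh x).trans' ?_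
      obtain ⟨hφl, hφr⟩ := abs_le.1 hφ
      have hx1 : |x| ≤ 1 := abs_le.2 ⟨by linarith [hx.1], by linarith [hx.2]⟩
      gcongr

lemma half_le_avg_tent (hh : 0 ≤ h) (hL : 2 ≤ L) {φ : ℝ} (hφ : |φ| ≤ L / 2) :
    h / 2 ≤ avg (tent h L) φ := by
  rcases le_total |φ| (1/2) with hφ' | hφ'
  · refine (le_avg_tent hh (by linarith) hφ').trans' ?_
    have : 1 / L ≤ 1 / 2 := one_div_le_one_div_of_le two_pos hL
    nlinarith
  · refine ((mul_one_sub_le_tent hh φ).trans (tent_le_avg_tent hh hφ')).trans' ?_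
    have : |φ| / L ≤ 1 / 2 := by rw [div_le_iff₀ (by linarith)]; linarith
    nlinarith

lemma continuous_avg_tent (h L : ℝ) : Continuous (avg (tent h L)) :=
  continuous_avg (continuous_tent h L).locallyIntegrable

lemma hasCompactSupport_avg_tent (h : ℝ) (hL : 0 < L) : HasCompactSupport (avg (tent h L)) :=
  (hasCompactSupport_tent h hL).avg

lemma integral_sq_avg_tent_ge (hh : 0 ≤ h) (hL : 1 ≤ L) :
    2 * h ^ 2 * L / 3 - 2 * h ^ 2 / L ≤ ∫ φ, avg (tent h L) φ ^ 2 := by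
  set I : Set ℝ := Icc (-(1/2)) (1/2)
  have hpointwise : ∀ φ,
      tent h L φ ^ 2 - I.indicator (fun _ => 2 * h ^ 2 / L) φ ≤ avg (tent h L) φ ^ 2 := by
    intro φ
    by_cases hφ : φ ∈ I
    · rw [indicator_of_mem hφ]
      have hsq : tent h L φ ^ 2 ≤ h ^ 2 :=
        pow_le_pow_left₀ (tent_nonneg hh φ) (tent_le hh (by linarith) φ) 2
      have hexpand : (h * (1 - 1 / L)) ^ 2 = h ^ 2 - 2 * h ^ 2 / L + h ^ 2 / L ^ 2 := by
        field_simp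
        ring
      have hpos : 0 ≤ h * (1 - 1 / L) :=
        mul_nonneg hh (by rw [sub_nonneg, div_le_one (by linarith)]; exact hL)
      calc tent h L φ ^ 2 - 2 * h ^ 2 / L ≤ (h * (1 - 1 / L)) ^ 2 := by
            rw [hexpand]; linarith [show 0 ≤ h ^ 2 / L ^ 2 by positivity]
        _ ≤ avg (tent h L) φ ^ 2 :=
            pow_le_pow_left₀ hpos (le_avg_tent hh (by linarith) (abs_le.2 hφ)) 2
    · rw [indicator_of_notMem hφ, sub_zero]
      have hφ' : 1/2 ≤ |φ| := le_of_not_gt fun hlt => hφ (abs_le.1 hlt.le)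
      exact pow_le_pow_left₀ (tent_nonneg hh φ) (tent_le_avg_tent hh hφ') 2
  have hL0 : 0 < L := by linarith
  have hint_tent : Integrable fun φ => tent h L φ ^ 2 :=
    integrable_comp_of_hasCompactSupport (continuousOn_pow 2) (by simp) (continuous_tent h L)
      (hasCompactSupport_tent h hL0) fun _ => mem_univ _
  have hint_avg : Integrable fun φ => avg (tent h L) φ ^ 2 :=
    integrable_comp_of_hasCompactSupport (continuousOn_pow 2) (by simp) (continuous_avg_tent h L)
      (hasCompactSupport_avg_tent h hL0) fun _ => mem_univ _
  have hint_ind : Integrable (I.indicator fun _ => 2 * h ^ 2 / L) :=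
    (integrableOn_const measure_Icc_lt_top.ne).integrable_indicator measurableSet_Icc
  calc 2 * h ^ 2 * L / 3 - 2 * h ^ 2 / L
      = ∫ φ, (tent h L φ ^ 2 - I.indicator (fun _ => 2 * h ^ 2 / L) φ) := by
        rw [integral_sub hint_tent hint_ind, integral_tent_sq h hL0,
          integral_indicator_const _ measurableSet_Icc, volume_real_Icc_of_le (by norm_num)]
        norm_num
    _ ≤ ∫ φ, avg (tent h L) φ ^ 2 := integral_mono (hint_tent.sub hint_ind) hint_avg hpointwise

lemma integral_rpow_avg_tent_ge (hh : 0 ≤ h) (hL : 2 ≤ L) {p : ℝ} (hp : 0 < p) :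
    L * (h / 2) ^ p ≤ ∫ φ, avg (tent h L) φ ^ p := by
  have hnonneg : ∀ φ, 0 ≤ avg (tent h L) φ := avg_nonneg (tent_nonneg hh)
  have hint : Integrable fun φ => avg (tent h L) φ ^ p :=
    integrable_comp_of_hasCompactSupport (s := Ici 0)
      (Real.continuous_rpow_const hp.le).continuousOn
      (Real.zero_rpow hp.ne') (continuous_avg_tent h L) (hasCompactSupport_avg_tent h (by linarith))
      hnonneg
  calc L * (h / 2) ^ p = (h / 2) ^ p * volume.real (Icc (-(L / 2)) (L / 2)) := by
        rw [volume_real_Icc_of_le (by linarith)]; ring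
    _ ≤ ∫ φ in Icc (-(L / 2)) (L / 2), avg (tent h L) φ ^ p :=
        setIntegral_ge_of_const_le_real measurableSet_Icc measure_Icc_lt_top.ne
          (fun φ hφ => Real.rpow_le_rpow (by positivity)
            (half_le_avg_tent hh hL (abs_le.2 hφ)) hp.le)
          hint.integrableOn
    _ ≤ ∫ φ, avg (tent h L) φ ^ p :=
        setIntegral_le_integral hint (Eventually.of_forall fun φ => Real.rpow_nonneg (hnonneg φ) p)

lemma memS_tent (hh : 0 ≤ h) (hL : 0 < L) {γ : ℝ} (hγ : h ^ 2 * L ≤ 3 * γ) : memS γ (tent h L) := by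
  refine ⟨⟨(continuous_tent h L).memLp_of_hasCompactSupport (hasCompactSupport_tent h hL), ?_⟩,
    ⟨Eventually.of_forall (tent_neg h L), Eventually.of_forall fun q hq hqq => ?_⟩,
    Eventually.of_forall (tent_nonneg hh)⟩
  · rw [integral_tent_sq h hL]
    linarith
  · exact tent_anti hh hL.le (by rwa [abs_of_nonneg hq, abs_of_nonneg (hq.trans hqq)])

end Tent

lemma le_integral_comp_of_growth {Φ V : ℝ → ℝ} {β ε p : ℝ} (hΦ : ContinuousOn Φ (Ici 0))
    (hΦ0 : Φ 0 = 0) (hp : 0 < p) (hgrowth : ∀ r : ℝ, 0 ≤ r → Φ r ≥ β / 2 * r ^ 2 + ε * r ^ p)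
    (hV : Continuous V) (hVc : HasCompactSupport V) (hV0 : ∀ x, 0 ≤ V x) :
    β / 2 * (∫ x, V x ^ 2) + ε * ∫ x, V x ^ p ≤ ∫ x, Φ (V x) := by
  have hsq : Integrable fun x => V x ^ 2 :=
    integrable_comp_of_hasCompactSupport (continuousOn_pow 2) (by simp) hV hVc fun _ => mem_univ _
  have hrpow : Integrable fun x => V x ^ p :=
    integrable_comp_of_hasCompactSupport (s := Ici 0)
      (Real.continuous_rpow_const hp.le).continuousOn
      (Real.zero_rpow hp.ne') hV hVc hV0
  calc β / 2 * (∫ x, V x ^ 2) + ε * ∫ x, V x ^ p = ∫ x, (β / 2 * V x ^ 2 + ε * V x ^ p) := by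
        rw [integral_add (hsq.const_mul _) (hrpow.const_mul _), integral_const_mul,
          integral_const_mul]
    _ ≤ ∫ x, Φ (V x) := integral_mono ((hsq.const_mul _).add (hrpow.const_mul _))
        (integrable_comp_of_hasCompactSupport hΦ hΦ0 hV hVc hV0) fun x => hgrowth _ (hV0 x)

lemma exists_memS_lt_PE {Φ : ℝ → ℝ} {β ε p h L γ : ℝ} (hΦ : ContinuousOn Φ (Ici 0)) (hΦ0 : Φ 0 = 0)
    (hgrowth : ∀ r : ℝ, 0 ≤ r → Φ r ≥ β / 2 * r ^ 2 + ε * r ^ p) (hβ : 0 ≤ β) (hε : 0 ≤ ε)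
    (hp : 0 < p) (hh : 0 < h) (hL : 2 ≤ L) (hγ : h ^ 2 * L = 3 * γ)
    (hcond : 2 ^ p * β < ε * L ^ 2 * h ^ (p - 2)) :
    ∃ W, memS γ W ∧ β * γ < PE Φ W := by
  have hL0 : 0 < L := by linarith
  refine ⟨tent h L, memS_tent hh.le hL0 hγ.le, ?_⟩
  have hlower := le_integral_comp_of_growth hΦ hΦ0 hp hgrowth (continuous_avg_tent h L)
    (hasCompactSupport_avg_tent h hL0) (avg_nonneg (tent_nonneg hh.le))
  have hsq := integral_sq_avg_tent_ge hh.le (by linarith : 1 ≤ L)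
  have hrpow := integral_rpow_avg_tent_ge hh.le hL hp
  have hsplit : (h / 2) ^ p = h ^ (p - 2) * h ^ 2 / 2 ^ p := by
    rw [Real.div_rpow hh.le (by norm_num), ← Real.rpow_natCast, ← Real.rpow_add hh]
    norm_num
  have hgain : β * h ^ 2 / L < ε * (L * (h / 2) ^ p) := by
    rw [hsplit]
    have := mul_lt_mul_of_pos_right hcond (show 0 < h ^ 2 / (2 ^ p * L) by positivity)
    field_simp at this ⊢
    linarith
  have hβγ : β * γ = β / 2 * (2 * h ^ 2 * L / 3 - 2 * h ^ 2 / L) + β * h ^ 2 / L := by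
    rw [show γ = h ^ 2 * L / 3 by linarith]
    field_simp
    ring
  unfold PE
  linarith [mul_le_mul_of_nonneg_left hsq (by linarith : 0 ≤ β / 2),
    mul_le_mul_of_nonneg_left hrpow hε]

lemma eventually_two_le_and_lt_of_lt_six {β ε p γ : ℝ} (hε : 0 < ε) (hγ : 0 < γ) (hp : p < 6) :
    ∀ᶠ t in 𝓝[>] (0 : ℝ),
      2 ≤ 3 * γ / t ^ 2 ∧ 2 ^ p * β < ε * (3 * γ / t ^ 2) ^ 2 * t ^ (p - 2) := by
  have hsmall : ∀ᶠ t in 𝓝[>] (0 : ℝ), t ^ 2 < 3 * γ / 2 :=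
    (((continuous_pow 2).tendsto' 0 0 (by simp)).mono_left nhdsWithin_le_nhds).eventually_lt_const
      (by positivity)
  have hlarge : ∀ᶠ t in 𝓝[>] (0 : ℝ), 2 ^ p * β < 9 * γ ^ 2 * ε * t ^ (p - 6) :=
    ((tendsto_rpow_neg_nhdsGT_zero (by linarith)).const_mul_atTop
      (by positivity)).eventually_gt_atTop _
  filter_upwards [hsmall, hlarge, self_mem_nhdsWithin] with t hsmall hlarge (ht : 0 < t)
  refine ⟨by rw [le_div_iff₀ (by positivity)]; linarith, hlarge.trans_eq ?_⟩
  rw [show p - 6 = p - 2 - 4 by ring, Real.rpow_sub ht, Real.rpow_ofNat]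
  field_simp
  ring

theorem statement15_general (Φ : ℝ → ℝ) (β ε p : ℝ)
    (hC2 : ContDiffOn ℝ 2 Φ (Set.Ici 0))
    (hΦ0 : Φ 0 = 0)
    (hβ0 : 0 ≤ β)
    (hε : 0 < ε) (hp : 2 < p)
    (hgrowth : ∀ r : ℝ, 0 ≤ r → Φ r ≥ β/2 * r^2 + ε * r ^ p) :
    ∃ γ₀ : ℝ, 0 ≤ γ₀ ∧
      (∀ γ, γ₀ < γ → ∃ W, memS γ W ∧ β*γ < PE Φ W) ∧
      ((β = 0 ∨ (2 < p ∧ p < 6)) → ∀ γ, 0 < γ → ∃ W, memS γ W ∧ β*γ < PE Φ W) := by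
  have hΦ := hC2.continuousOn
  have hwidth_two : ∀ γ, 0 < γ → 2 ^ p * β < ε * 2 ^ 2 * √(3 / 2 * γ) ^ (p - 2) →
      ∃ W, memS γ W ∧ β * γ < PE Φ W := fun γ hγ hcond =>
    exists_memS_lt_PE hΦ hΦ0 hgrowth hβ0 hε.le (by linarith) (by positivity) le_rfl
      (by rw [Real.sq_sqrt (by positivity)]; ring) hcond
  have hgrowing : Tendsto (fun γ => ε * 2 ^ 2 * √(3 / 2 * γ) ^ (p - 2)) atTop atTop :=
    ((tendsto_rpow_atTop (by linarith)).comp (Real.tendsto_sqrt_atTop.comp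
      (tendsto_id.const_mul_atTop (by norm_num : (0 : ℝ) < 3 / 2)))).const_mul_atTop (by positivity)
  obtain ⟨γ₁, hγ₁⟩ := eventually_atTop.1 (hgrowing.eventually_gt_atTop (2 ^ p * β))
  refine ⟨max γ₁ 0, le_max_right _ _, fun γ hγ => ?_, ?_⟩
  · exact hwidth_two γ ((le_max_right _ _).trans_lt hγ) (hγ₁ γ ((le_max_left _ _).trans hγ.le))
  · rintro (hβ | ⟨-, hp6⟩) γ hγ
    · exact hwidth_two γ hγ (by rw [hβ, mul_zero]; positivity)
    · obtain ⟨t, ⟨hL, hcond⟩, ht⟩ :=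
        ((eventually_two_le_and_lt_of_lt_six hε hγ hp6).and self_mem_nhdsWithin).exists
      exact exists_memS_lt_PE hΦ hΦ0 hgrowth hβ0 hε.le (by linarith) ht hL (by field_simp) hcond

/-- for a super-quadratic `Φ` with `Φ(r) ≥ (β/2)r² + εr^p` (`ε > 0`,
`p > 2`) there is `γ₀ ≥ 0` such that `sup_{S_γ} P > βγ` for all `γ > γ₀`; if `β = 0`
or `2 < p < 6` one may take `γ₀ = 0`. -/
theorem statement15 (Φ : ℝ → ℝ) (β ε p : ℝ)
    (hC2 : ContDiffOn ℝ 2 Φ (Set.Ici 0))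
    (hsq : ∀ r : ℝ, 0 ≤ r → ∀ s : ℝ, 1 ≤ s → Φ (s*r) ≥ s^2 * Φ r)
    (hΦ0 : Φ 0 = 0) (hΦp0 : derivWithin Φ (Set.Ici 0) 0 = 0)
    (hβdef : β = iteratedDerivWithin 2 Φ (Set.Ici 0) 0) (hβ0 : 0 ≤ β)
    (hε : 0 < ε) (hp : 2 < p)
    (hgrowth : ∀ r : ℝ, 0 ≤ r → Φ r ≥ β/2 * r^2 + ε * r ^ p) :
    ∃ γ₀ : ℝ, 0 ≤ γ₀ ∧
      (∀ γ, γ₀ < γ → ∃ W, memS γ W ∧ β*γ < PE Φ W) ∧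
      ((β = 0 ∨ (2 < p ∧ p < 6)) → ∀ γ, 0 < γ → ∃ W, memS γ W ∧ β*γ < PE Φ W) :=
  statement15_general Φ β ε p hC2 hΦ0 hβ0 hε hp hgrowth
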